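/- arXiv:2307.16203 — 5 statements merged into one kernel-verified Lean document; each statement's English description precedes it below -/
import Mathlib

section
/- Translation-equivalence of multi-layer zero-padded convolution: with d_0 = d, d_ℓ = d + ℓs, filters w¹,…,w^L supported on {0,…,s}, v ∈ ℝ^d supported on {1,…,p}, and 1 ≤ j ≤ d - p + 1, one has w^L * ⋯ * w¹ * (A_{j,d} v) = A_{j,d_L} (w^L * ⋯ * w¹ * v), where each * denotes the zero-padded convolution mapping ℝ^{d_{ℓ-1}} → ℝ^{d_ℓ}. -/
/-- A sequence `w : ℤ → ℝ` is supported on `{0,…,s}`. -/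
def SuppOn (s : ℕ) (w : ℤ → ℝ) : Prop :=
  ∀ j : ℤ, (j < 0 ∨ (s : ℤ) < j) → w j = 0

/-- Zero-padded convolution of a filter `w` with a vector `v ∈ ℝ^n`,
viewed in `ℝ^m`: `(w * v)_j = Σ_{k=1}^{n} w_{j-k} v_k`. -/
def convVecD (w : ℤ → ℝ) {n m : ℕ} (v : Fin n → ℝ) : Fin m → ℝ :=
  fun j => ∑ k : Fin n, w ((j : ℤ) - (k : ℤ)) * v k

/-- Iterated zero-padded convolution `w^L * ⋯ * w¹ * v` with layer widths
`D 0, D 1, …, D L`. -/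
def iterConvVec (w : ℕ → ℤ → ℝ) (D : ℕ → ℕ) :
    (L : ℕ) → (Fin (D 0) → ℝ) → Fin (D L) → ℝ
  | 0, v => v
  | L + 1, v => convVecD (w L) (iterConvVec w D L v)

/-- The shift matrix `A_{j,d}` (1-based `j`). -/
def shiftMat (d j : ℕ) : Matrix (Fin d) (Fin d) ℝ :=
  Matrix.of fun i k => if (i : ℕ) = (k : ℕ) + (j - 1) then 1 else 0

/-!
Write `t = j - 1`. One layer commutes with the shift as soon as its input vanishes on the last
`t` coordinates: after the substitution `k ↦ k + t` both sides become `∑ k, w (i - t - k) * u k`,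
the left one because the shift pushes nothing out of range, the right one because `w` vanishes on
negative arguments, which accounts for the coordinates `i < t` that the shift leaves empty.
A filter of width `s` lengthens the support by `s`, so after `L` layers the signal lives on the
first `p + L s` of the `d + L s` coordinates, and `t ≤ d - p` keeps that hypothesis at every layer.
-/

open Matrix

lemma Fin.sum_ite_val_eq {M : Type*} [AddCommMonoid M] {n : ℕ} (a : ℕ) (f : Fin n → M) :
    ∑ x : Fin n, (if (x : ℕ) = a then f x else 0) = if h : a < n then f ⟨a, h⟩ else 0 := by
  split_ifs with h
  · have hcond : ∀ x : Fin n, ((x : ℕ) = a) ↔ (x = ⟨a, h⟩) := fun x => by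
      simp [Fin.ext_iff]
    simp only [hcond, Finset.sum_ite_eq', Finset.mem_univ, if_true]
  · exact Finset.sum_eq_zero fun x _ => if_neg (by omega)

lemma shiftMat_mulVec_apply (d j : ℕ) (u : Fin d → ℝ) (i : Fin d) :
    (shiftMat d j *ᵥ u) i =
      if h : j - 1 ≤ (i : ℕ) then u ⟨i - (j - 1), by omega⟩ else 0 := by
  simp only [mulVec, dotProduct, shiftMat, of_apply, ite_mul, one_mul, zero_mul]
  split_ifs with h
  · have hcond : ∀ k : Fin d, ((i : ℕ) = k + (j - 1)) ↔ ((k : ℕ) = i - (j - 1)) := fun k => by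
      omega
    simp only [hcond, Fin.sum_ite_val_eq, dif_pos (show (i : ℕ) - (j - 1) < d by omega)]
  · exact Finset.sum_eq_zero fun k _ => if_neg (by omega)

lemma vecMul_shiftMat_apply (d j : ℕ) (r : Fin d → ℝ) (k : Fin d) :
    (r ᵥ* shiftMat d j) k = if h : k + (j - 1) < d then r ⟨k + (j - 1), h⟩ else 0 := by
  simp only [vecMul, dotProduct, shiftMat, of_apply, mul_ite, mul_one, mul_zero,
    Fin.sum_ite_val_eq]

lemma convVecD_apply_eq_dotProduct (w : ℤ → ℝ) {n m : ℕ} (u : Fin n → ℝ) (i : Fin m) :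
    (convVecD w u : Fin m → ℝ) i = (fun k : Fin n => w (i - k)) ⬝ᵥ u :=
  rfl

lemma convVecD_shiftMat_mulVec (j : ℕ) (w : ℤ → ℝ) (hw : ∀ a : ℤ, a < 0 → w a = 0) {n m : ℕ}
    (u : Fin n → ℝ) (hu : ∀ k : Fin n, n ≤ k + (j - 1) → u k = 0) :
    (convVecD w (shiftMat n j *ᵥ u) : Fin m → ℝ) = shiftMat m j *ᵥ convVecD w u := by
  ext i
  have hlhs : (convVecD w (shiftMat n j *ᵥ u) : Fin m → ℝ) i
      = ∑ k : Fin n, w (i - (j - 1 : ℕ) - k) * u k := by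
    rw [convVecD_apply_eq_dotProduct, dotProduct_mulVec, dotProduct]
    refine Finset.sum_congr rfl fun k _ => ?_
    rw [vecMul_shiftMat_apply]
    split_ifs with h
    · push_cast
      ring_nf
    · rw [hu k (by omega), mul_zero, mul_zero]
  rw [hlhs, shiftMat_mulVec_apply]
  split_ifs with h
  · simp only [convVecD, Nat.cast_sub h]
  · exact Finset.sum_eq_zero fun k _ => by rw [hw _ (by omega), zero_mul]

lemma convVecD_eq_zero_of_le (s q : ℕ) (w : ℤ → ℝ) (hw : ∀ a : ℤ, (s : ℤ) < a → w a = 0)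
    {n m : ℕ} (u : Fin n → ℝ) (hu : ∀ k : Fin n, q ≤ (k : ℕ) → u k = 0)
    (i : Fin m) (hi : q + s ≤ (i : ℕ)) : (convVecD w u : Fin m → ℝ) i = 0 := by
  refine Finset.sum_eq_zero fun k _ => ?_
  by_cases hk : q ≤ (k : ℕ)
  · rw [hu k hk, mul_zero]
  · rw [hw _ (by omega), zero_mul]

lemma iterConvVec_eq_zero_of_le (s p : ℕ) (D : ℕ → ℕ) (w : ℕ → ℤ → ℝ)
    (hw : ∀ k, ∀ a : ℤ, (s : ℤ) < a → w k a = 0) (v : Fin (D 0) → ℝ)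
    (hv : ∀ i : Fin (D 0), p ≤ (i : ℕ) → v i = 0) :
    ∀ (L : ℕ) (i : Fin (D L)), p + L * s ≤ (i : ℕ) → iterConvVec w D L v i = 0
  | 0, i, hi => hv i (by omega)
  | L + 1, i, hi => convVecD_eq_zero_of_le s (p + L * s) (w L) (hw L) _
      (iterConvVec_eq_zero_of_le s p D w hw v hv L) i (by rw [Nat.succ_mul] at hi; omega)

lemma iterConvVec_shiftMat_mulVec (j : ℕ) (D : ℕ → ℕ) (w : ℕ → ℤ → ℝ)
    (hw : ∀ k, ∀ a : ℤ, a < 0 → w k a = 0) (v : Fin (D 0) → ℝ)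
    (hv : ∀ (L : ℕ) (i : Fin (D L)), D L ≤ i + (j - 1) → iterConvVec w D L v i = 0) :
    ∀ L, iterConvVec w D L (shiftMat (D 0) j *ᵥ v) = shiftMat (D L) j *ᵥ iterConvVec w D L v
  | 0 => rfl
  | L + 1 => by
    change convVecD (w L) (iterConvVec w D L _) = _
    rw [iterConvVec_shiftMat_mulVec j D w hw v hv L]
    exact convVecD_shiftMat_mulVec j (w L) (hw L) _ (hv L)

theorem iterConv_shift_comm_general (s p j L : ℕ)
    (D : ℕ → ℕ) (hD : ∀ k, D (k + 1) = D k + s)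
    (w : ℕ → ℤ → ℝ) (hw : ∀ k, SuppOn s (w k))
    (v : Fin (D 0) → ℝ)
    (hv : ∀ i : Fin (D 0), p ≤ (i : ℕ) → v i = 0)
    (hj : j ≤ D 0 - p + 1) :
    iterConvVec w D L ((shiftMat (D 0) j).mulVec v) =
      (shiftMat (D L) j).mulVec (iterConvVec w D L v) := by
  have hDL : ∀ K, D K = D 0 + K * s := fun K => by
    induction K with
    | zero => simp
    | succ K ih => rw [hD, ih, Nat.succ_mul, add_assoc]
  have hsupp := iterConvVec_eq_zero_of_le s p D w (fun k a ha => hw k a (Or.inr ha)) v hv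
  exact iterConvVec_shiftMat_mulVec j D w (fun k a ha => hw k a (Or.inl ha)) v
    (fun K i hi => hsupp K i (by have := hDL K; omega)) L

/-- Translation-equivalence of multi-layer zero-padded convolution:
with `d_0 = d`, `d_ℓ = d + ℓ s`, filters supported on `{0,…,s}`, `v` supported
on the first `p` coordinates and `1 ≤ j ≤ d - p + 1`,
`w^L * ⋯ * w¹ * (A_{j,d} v) = A_{j,d_L} (w^L * ⋯ * w¹ * v)`. -/
theorem iterConv_shift_comm (s p j L : ℕ) (hs : 2 ≤ s)
    (D : ℕ → ℕ) (hD : ∀ k, D (k + 1) = D k + s) (hsd : s ≤ D 0)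
    (w : ℕ → ℤ → ℝ) (hw : ∀ k, SuppOn s (w k))
    (v : Fin (D 0) → ℝ) (hp : 1 ≤ p) (hpd : p ≤ D 0)
    (hv : ∀ i : Fin (D 0), p ≤ (i : ℕ) → v i = 0)
    (hj1 : 1 ≤ j) (hj : j ≤ D 0 - p + 1) :
    iterConvVec w D L ((shiftMat (D 0) j).mulVec v) =
      (shiftMat (D L) j).mulVec (iterConvVec w D L v) :=
  iterConv_shift_comm_general s p j L D hD w hw v hv hj
end

section
/- Failure of translation-equivalence for contracting convolution: for any d' ≥ s + p + 1 with s ≥ 2, there exist a filter w supported on {0,…,s}, a vector v supported on {1,…,p}, and an index j ∈ {1,…,d'-p+1} such that A_{j,d'-s}(w ⋆ v) ≠ w ⋆ (A_{j,d'} v), where ⋆ is the contracting (valid, no-padding) convolution (w ⋆ v)_j = Σ_{k=j-s}^{j} w_{j-k} v_{k+s}, j = 1,…,d'-s. -/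
/-- 1-based extension of a vector `v ∈ ℝ^{d'}` by zeros: `vext v n = v_n`
for `1 ≤ n ≤ d'` (1-based) and `0` otherwise. -/
def vext {d' : ℕ} (v : Fin d' → ℝ) : ℕ → ℝ :=
  fun n => if h : 1 ≤ n ∧ n ≤ d' then v ⟨n - 1, by omega⟩ else 0

/-- Contracting (valid, no zero-padding) convolution
`(w ⋆ v)_j = Σ_{k=j-s}^{j} w_{j-k} v_{k+s} = Σ_{i=0}^s w_i v_{j+s-i}`,
mapping `ℝ^{d'} → ℝ^{d'-s}` (1-based indices). -/
def cconv (s d' : ℕ) (w : ℤ → ℝ) (v : Fin d' → ℝ) : Fin (d' - s) → ℝ :=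
  fun j => ∑ i ∈ Finset.range (s + 1), w i * vext v ((j : ℕ) + 1 + s - i)

lemma vext_val_succ {d : ℕ} (v : Fin d → ℝ) (i : Fin d) : vext v (i + 1) = v i := by
  simp [vext]

lemma suppOn_single_zero (s : ℕ) : SuppOn s (Pi.single 0 1) := fun j hj =>
  Pi.single_eq_of_ne (by omega) 1

lemma cconv_single_zero_apply (s d : ℕ) (v : Fin d → ℝ) (m : Fin (d - s)) :
    cconv s d (Pi.single 0 1) v m = v ⟨m + s, by omega⟩ := by
  rw [cconv, Finset.sum_eq_single 0 (fun i _ hi => by simp [hi])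
    (by simp), Nat.cast_zero, Pi.single_eq_same, one_mul, Nat.sub_zero, add_right_comm]
  exact vext_val_succ v ⟨m + s, _⟩

lemma shiftMat_mulVec_single (d j : ℕ) (k : Fin d) (i : Fin d) :
    (shiftMat d j).mulVec (Pi.single k 1) i = if (i : ℕ) = k + (j - 1) then 1 else 0 := by
  simp [shiftMat]

/-- Failure of translation-equivalence for the contracting convolution:
for `s ≥ 2`, `p ≥ 1` and `d' ≥ s + p + 1`, there are a filter `w` supported on
`{0,…,s}`, a vector `v` supported on the first `p` coordinates, and an index
`j ∈ {1,…,d'-p+1}` with `A_{j,d'-s}(w ⋆ v) ≠ w ⋆ (A_{j,d'} v)`. -/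
theorem cconv_not_translation_equivariant (d' s p : ℕ)
    (hs : 2 ≤ s) (hp : 1 ≤ p) (hd : s + p + 1 ≤ d') :
    ∃ (w : ℤ → ℝ) (v : Fin d' → ℝ) (j : ℕ),
      SuppOn s w ∧ (∀ i : Fin d', p ≤ (i : ℕ) → v i = 0) ∧
      1 ≤ j ∧ j ≤ d' - p + 1 ∧
      (shiftMat (d' - s) j).mulVec (cconv s d' w v) ≠
        cconv s d' w ((shiftMat d' j).mulVec v) := by
  let e₀ : Fin d' → ℝ := Pi.single ⟨0, by omega⟩ 1
  have he₀ : ∀ i : Fin d', (i : ℕ) ≠ 0 → e₀ i = 0 := fun i hi =>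
    Pi.single_eq_of_ne (Fin.ne_of_val_ne hi) 1
  refine ⟨Pi.single 0 1, e₀, d' - p + 1, suppOn_single_zero s,
    fun i hi => he₀ i (by omega), by omega, le_rfl, fun h => ?_⟩
  -- `e₀` lies in the first `s` coordinates, which the convolution discards before shifting
  -- but not after shifting `e₀` to position `d' - p`.
  have hconv_e₀ : cconv s d' (Pi.single 0 1) e₀ = 0 := funext fun m => by
    rw [cconv_single_zero_apply]
    exact he₀ _ (by dsimp only; omega)
  have hm := congrFun h ⟨d' - p - s, by omega⟩
  rw [hconv_e₀, Matrix.mulVec_zero, cconv_single_zero_apply, shiftMat_mulVec_single] at hm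
  simp only [Pi.zero_apply] at hm
  rw [if_pos (by omega)] at hm
  exact zero_ne_one hm
end

section
/- Translation-invariance of eDCNN with location-based pooling: let d_0 = d, d_ℓ = d + ℓs, filters w¹,…,w^L supported on {0,…,s}, and define the pooling S_{d_L,d,j}(v) = (v_{kd+j})_{k=1}^{[d_L/d]} (with out-of-range entries set to 0). Then for a vector v ∈ ℝ^d supported on {1,…,p} and any 1 ≤ j, j' ≤ d - p + 1, S_{d_L,d,j}(w^L * ⋯ * w¹ * v_{p,d,j}) = S_{d_L,d,j'}(w^L * ⋯ * w¹ * v_{p,d,j'}), where v_{p,d,j} = A_{j,d} v is the translate of v to support {j,…,j+p-1}. -/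
/-- Location-based pooling `S_{d',u,j}`: the `k`-th pooled entry (`k ≥ 1`)
is `v_{ku+j}` (1-based), with out-of-range entries set to `0`. -/
def pool (d' u j : ℕ) (v : Fin d' → ℝ) : ℕ → ℝ :=
  fun k => vext v (k * u + j)

/-- Zero extension as `vext`, but indexed from `0`. -/
def zeroExt {n : ℕ} (v : Fin n → ℝ) : ℤ → ℝ :=
  fun i => if h : 0 ≤ i ∧ i < n then v ⟨i.toNat, by omega⟩ else 0

noncomputable def intConv (w f : ℤ → ℝ) : ℤ → ℝ :=
  fun i => ∑ᶠ k, w (i - k) * f k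

lemma zeroExt_natCast {n : ℕ} (v : Fin n → ℝ) (k : Fin n) : zeroExt v (k : ℕ) = v k := by
  simp [zeroExt]

lemma vext_eq_zeroExt {d' : ℕ} (v : Fin d' → ℝ) (n : ℕ) : vext v n = zeroExt v (n - 1) := by
  unfold vext zeroExt
  by_cases h : 1 ≤ n ∧ n ≤ d'
  · rw [dif_pos h, dif_pos (by omega)]
    congr 2
    omega
  · rw [dif_neg h, dif_neg (by omega)]

lemma finsum_mul_zeroExt {n : ℕ} (g : ℤ → ℝ) (u : Fin n → ℝ) :
    ∑ᶠ k, g k * zeroExt u k = ∑ k : Fin n, g (k : ℕ) * u k := by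
  let castEmb : Fin n ↪ ℤ := Fin.valEmbedding.trans Nat.castEmbedding
  have hsupp : Function.support (fun k => g k * zeroExt u k) ⊆ Finset.univ.map castEmb := by
    intro i hi
    have hrange : 0 ≤ i ∧ i < n := by
      by_contra h
      exact hi (by simp [zeroExt, h])
    simp only [Finset.coe_map, Finset.coe_univ, Set.image_univ, Set.mem_range]
    exact ⟨⟨i.toNat, by omega⟩, by simp [castEmb]; omega⟩
  rw [finsum_eq_sum_of_support_subset _ hsupp, Finset.sum_map]
  simp [castEmb, zeroExt_natCast]

lemma intConv_comp_sub (w f : ℤ → ℝ) (c : ℤ) :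
    intConv w (fun i => f (i - c)) = fun i => intConv w f (i - c) := by
  funext i
  rw [intConv, intConv, ← finsum_comp_equiv (Equiv.addRight c)]
  refine finsum_congr fun k => ?_
  simp only [Equiv.coe_addRight, add_sub_cancel_right]
  ring_nf

lemma zeroExt_convVecD {s n m : ℕ} {w : ℤ → ℝ} (hw : SuppOn s w) (hm : n + s ≤ m)
    (u : Fin n → ℝ) : zeroExt (convVecD w u : Fin m → ℝ) = intConv w (zeroExt u) := by
  funext i
  rw [intConv, finsum_mul_zeroExt (fun k => w (i - k))]
  unfold zeroExt
  split_ifs with h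
  · simp [convVecD, Int.toNat_of_nonneg h.1]
  · refine (Finset.sum_eq_zero fun k _ => ?_).symm
    rw [hw _ (by omega), zero_mul]

lemma zeroExt_iterConvVec_of_translate {s : ℕ} {D : ℕ → ℕ} (hD : ∀ k, D k + s ≤ D (k + 1))
    {w : ℕ → ℤ → ℝ} (hw : ∀ k, SuppOn s (w k)) {u u' : Fin (D 0) → ℝ} {c : ℤ}
    (hu : zeroExt u' = fun i => zeroExt u (i - c)) (L : ℕ) :
    zeroExt (iterConvVec w D L u') = fun i => zeroExt (iterConvVec w D L u) (i - c) := by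
  induction L with
  | zero => exact hu
  | succ L ih =>
    simp only [iterConvVec, zeroExt_convVecD (hw L) (hD L), ih, intConv_comp_sub]

lemma zeroExt_shiftMat_mulVec {d j : ℕ} {v : Fin d → ℝ}
    (hv : ∀ i : Fin d, d ≤ i + (j - 1) → v i = 0) :
    zeroExt ((shiftMat d j).mulVec v) = fun i => zeroExt v (i - (j - 1 : ℕ)) := by
  funext i
  by_cases hi : 0 ≤ i ∧ i < d
  · have hrow : (shiftMat d j).mulVec v ⟨i.toNat, by omega⟩ = zeroExt v (i - (j - 1 : ℕ)) := by
      calc _ = ∑ᶠ k, (if k = i - (j - 1 : ℕ) then (1 : ℝ) else 0) * zeroExt v k := by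
            rw [finsum_mul_zeroExt, Matrix.mulVec, dotProduct]
            refine Finset.sum_congr rfl fun k _ => ?_
            simp only [shiftMat, Matrix.of_apply]
            exact congrArg (· * v k) (if_congr (by omega) rfl rfl)
        _ = zeroExt v (i - (j - 1 : ℕ)) := by
            rw [finsum_eq_single _ (i - (j - 1 : ℕ)) fun k hk => by simp [hk]]
            simp
    rw [zeroExt, dif_pos hi, hrow]
  · rw [zeroExt, dif_neg hi, zeroExt]
    split_ifs with h
    · exact (hv _ (by simp; omega)).symm
    · rfl

theorem pooled_iterConv_translation_invariant_general (s p j j' L : ℕ)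
    (D : ℕ → ℕ) (hD : ∀ k, D (k + 1) = D k + s)
    (w : ℕ → ℤ → ℝ) (hw : ∀ k, SuppOn s (w k))
    (v : Fin (D 0) → ℝ)
    (hv : ∀ i : Fin (D 0), p ≤ (i : ℕ) → v i = 0)
    (hj1 : 1 ≤ j) (hj : j ≤ D 0 - p + 1)
    (hj'1 : 1 ≤ j') (hj' : j' ≤ D 0 - p + 1) :
    ∀ k : ℕ, 1 ≤ k → k ≤ D L / D 0 →
      pool (D L) (D 0) j (iterConvVec w D L ((shiftMat (D 0) j).mulVec v)) k =
        pool (D L) (D 0) j' (iterConvVec w D L ((shiftMat (D 0) j').mulVec v)) k := by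
  intro k _ _
  have hpooled {j : ℕ} (hj1 : 1 ≤ j) (hj : j ≤ D 0 - p + 1) :
      pool (D L) (D 0) j (iterConvVec w D L ((shiftMat (D 0) j).mulVec v)) k =
        zeroExt (iterConvVec w D L v) (k * D 0 : ℕ) := by
    have hshift := zeroExt_shiftMat_mulVec (j := j) fun i hi => hv i (by omega)
    rw [pool, vext_eq_zeroExt,
      zeroExt_iterConvVec_of_translate (fun k => (hD k).ge) hw hshift]
    exact congrArg _ (by omega)
  rw [hpooled hj1 hj, hpooled hj'1 hj']

/-- Translation-invariance of eDCNN with location-based pooling: with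
`d_ℓ = D ℓ`, `D 0 = d`, `D (ℓ+1) = D ℓ + s`, filters supported on `{0,…,s}`,
`v` supported on the first `p` coordinates and `1 ≤ j, j' ≤ d - p + 1`,
`S_{d_L,d,j}(w^L * ⋯ * w¹ * A_{j,d} v) = S_{d_L,d,j'}(w^L * ⋯ * w¹ * A_{j',d} v)`
on all pooled coordinates `k = 1,…,[d_L/d]`. -/
theorem pooled_iterConv_translation_invariant (s p j j' L : ℕ) (hs : 2 ≤ s)
    (D : ℕ → ℕ) (hD : ∀ k, D (k + 1) = D k + s) (hsd : s ≤ D 0)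
    (w : ℕ → ℤ → ℝ) (hw : ∀ k, SuppOn s (w k))
    (v : Fin (D 0) → ℝ) (hp : 1 ≤ p) (hpd : p ≤ D 0)
    (hv : ∀ i : Fin (D 0), p ≤ (i : ℕ) → v i = 0)
    (hj1 : 1 ≤ j) (hj : j ≤ D 0 - p + 1)
    (hj'1 : 1 ≤ j') (hj' : j' ≤ D 0 - p + 1) :
    ∀ k : ℕ, 1 ≤ k → k ≤ D L / D 0 →
      pool (D L) (D 0) j (iterConvVec w D L ((shiftMat (D 0) j).mulVec v)) k =
        pool (D L) (D 0) j' (iterConvVec w D L ((shiftMat (D 0) j').mulVec v)) k :=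
  pooled_iterConv_translation_invariant_general s p j j' L D hD w hw v hv hj1 hj hj'1 hj'
end

section
/- Stacking-rows factorization: for any matrix W ∈ ℝ^{ñ×d'} define the sequence u supported on {0,…,d'ñ−1} by stacking the columns appropriately so that the Toeplitz matrix T^u ∈ ℝ^{(d'ñ)×d'} (entries (T^u)_{i,k} = u_{i-k}) has its (j d')-th row equal to the j-th row of W for j = 1,…,ñ. Then the location-based pooling S with scale d' and offset 0 applied to T^u x recovers W x: S_{d'ñ, d', 0}(T^u x) = W x for all x ∈ ℝ^{d'}. -/
/-- The `m × n` Toeplitz matrix of a filter `w`, with `(i,k)`-entry `w_{i-k}`. -/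
def toep (m n : ℕ) (w : ℤ → ℝ) : Matrix (Fin m) (Fin n) ℝ :=
  Matrix.of fun i k => w ((i : ℤ) - (k : ℤ))

theorem pool_eq_of_le {m s j k : ℕ} (v : Fin m → ℝ) (h₁ : 1 ≤ k * s + j) (h₂ : k * s + j ≤ m) :
    pool m s j v k = v ⟨k * s + j - 1, by omega⟩ :=
  dif_pos ⟨h₁, h₂⟩

theorem toep_row_eq_of_stacked {m d' n : ℕ} {W : Matrix (Fin n) (Fin d') ℝ} {u : ℤ → ℝ}
    (hrow : ∀ (j : Fin n) (k : Fin d'),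
      u ((((j : ℕ) + 1) * d' : ℤ) - (((k : ℕ) : ℤ) + 1)) = W j k)
    (j : Fin n) (r : Fin m) (hr : (r : ℕ) + 1 = (j + 1) * d') :
    toep m d' u r = W j := by
  ext k
  rw [toep, Matrix.of_apply, ← hrow j k]
  congr 1
  have hr' : ((r : ℕ) : ℤ) + 1 = ((j : ℕ) + 1) * d' := by exact_mod_cast hr
  linear_combination hr'

theorem pool_toep_stacked_rows_general (d' n : ℕ) (hd : 1 ≤ d')
    (W : Matrix (Fin n) (Fin d') ℝ) (u : ℤ → ℝ)
    (hrow : ∀ (j : Fin n) (k : Fin d'),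
      u ((((j : ℕ) + 1) * d' : ℤ) - (((k : ℕ) : ℤ) + 1)) = W j k)
    (x : Fin d' → ℝ) :
    ∀ i : Fin n,
      pool (d' * n) d' 0 ((toep (d' * n) d' u).mulVec x) ((i : ℕ) + 1) =
        W.mulVec x i := by
  intro i
  have hpos : 1 ≤ ((i : ℕ) + 1) * d' + 0 := by nlinarith
  have hle : ((i : ℕ) + 1) * d' + 0 ≤ d' * n := by nlinarith [i.isLt]
  rw [pool_eq_of_le _ hpos hle]
  exact congrArg (· ⬝ᵥ x) (toep_row_eq_of_stacked hrow i _ (by dsimp only; omega))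

/-- Stacking-rows factorization: if `u` is supported on `{0,…,d'ñ-1}` and the
`(jd')`-th row of the Toeplitz matrix `T^u ∈ ℝ^{(d'ñ)×d'}` equals the `j`-th
row of `W` (i.e. `u_{jd'-k} = W_{j,k}`, 1-based), then pooling with scale `d'`
and offset `0` applied to `T^u x` recovers `W x`. -/
theorem pool_toep_stacked_rows (d' n : ℕ) (hd : 1 ≤ d') (hn : 1 ≤ n)
    (W : Matrix (Fin n) (Fin d') ℝ) (u : ℤ → ℝ)
    (hsupp : SuppOn (d' * n - 1) u)
    (hrow : ∀ (j : Fin n) (k : Fin d'),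
      u ((((j : ℕ) + 1) * d' : ℤ) - (((k : ℕ) : ℤ) + 1)) = W j k)
    (x : Fin d' → ℝ) :
    ∀ i : Fin n,
      pool (d' * n) d' 0 ((toep (d' * n) d' u).mulVec x) ((i : ℕ) + 1) =
        W.mulVec x i :=
  pool_toep_stacked_rows_general d' n hd W u hrow x
end

section
/- Convolutional factorization of arbitrary linear maps: let 2 ≤ s ≤ d', ñ ∈ ℕ, and W ∈ ℝ^{ñ×d'}. Then there exist L* = ⌈d'ñ/(s-1)⌉ filters w¹,…,w^{L*} each supported on {0,…,s} such that W x = S_{d'+L*s, d', 0}(w^{L*} * ⋯ * w¹ * x) for all x ∈ ℝ^{d'}, assuming the filter-factorization property: any sequence supported on {0,…,S} factors as a convolution of fewer than S/(s-1)+1 filters supported on {0,…,s}. -/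
/-- Zero-padded (full) convolution of sequences. -/
noncomputable def convSeq (w v : ℤ → ℝ) : ℤ → ℝ :=
  fun j => ∑ᶠ k : ℤ, w (j - k) * v k

/-- The delta filter (identity for convolution). -/
def deltaF : ℤ → ℝ := fun j => if j = 0 then 1 else 0

/-- Iterated convolution of filters: `iterFilter w L = w^L * ⋯ * w¹`. -/
noncomputable def iterFilter (w : ℕ → ℤ → ℝ) : ℕ → ℤ → ℝ
  | 0 => deltaF
  | L + 1 => convSeq (w L) (iterFilter w L)

/-! Lay the rows of `W`, each reversed, end to end into one sequence supported on
`{0,…,d'ñ}`. Its full convolution with `x` carries `(W x)_i` at position `(i + 1) d' - 1`,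
which is exactly what pooling with scale `d'` reads off. Factor that sequence into
`L ≤ ⌈d'ñ/(s-1)⌉` filters and pad with delta filters up to `L*` layers; since the layer
widths `d' + s k` never truncate, the iterated zero-padded convolution of `x` is the full
convolution of `x` with the product filter. -/

lemma suppOn_deltaF (s : ℕ) : SuppOn s deltaF := fun j hj => if_neg (by omega)

lemma convSeq_deltaF_left (f : ℤ → ℝ) : convSeq deltaF f = f := by
  funext j
  rw [convSeq, finsum_eq_single _ j fun k hk => by simp [deltaF, sub_eq_zero, Ne.symm hk]]
  simp [deltaF]

lemma convSeq_shift (w f : ℤ → ℝ) (k j : ℤ) :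
    convSeq w (fun t => f (t - k)) j = convSeq w f (j - k) := by
  rw [convSeq, convSeq, ← finsum_comp_equiv (Equiv.subRight k).symm]
  simp [sub_sub, add_comm]

lemma convSeq_eq_sum_fin {M N : ℕ} (w f : ℤ → ℝ) (hf : SuppOn M f) (hMN : M < N) (j : ℤ) :
    convSeq w f j = ∑ m : Fin N, w (j - m) * f m := by
  have hsupp : Function.support (fun t => w (j - t) * f t) ⊆
      ↑(Finset.univ.map ((Fin.valEmbedding (n := N)).trans Nat.castEmbedding) : Finset ℤ) := by
    intro t ht
    have ht' : 0 ≤ t ∧ t ≤ M := by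
      by_contra h
      exact ht (by simp [hf t (by omega)])
    simp only [Finset.coe_map, Finset.coe_univ, Set.image_univ, Set.mem_range]
    exact ⟨⟨t.toNat, by omega⟩, by simp [ht'.1]⟩
  rw [convSeq, finsum_eq_sum_of_support_subset _ hsupp, Finset.sum_map]
  rfl

lemma SuppOn.convSeq {a b : ℕ} {w v : ℤ → ℝ} (hw : SuppOn a w) (hv : SuppOn b v) :
    SuppOn (a + b) (convSeq w v) := by
  intro j hj
  refine finsum_eq_zero_of_forall_eq_zero fun k => ?_
  by_cases hk : k < 0 ∨ (b : ℤ) < k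
  · rw [hv k hk, mul_zero]
  · rw [hw (j - k) (by push_cast at hj; omega), zero_mul]

lemma suppOn_iterFilter {s : ℕ} {ws : ℕ → ℤ → ℝ} (hws : ∀ k, SuppOn s (ws k)) (L : ℕ) :
    SuppOn (s * L) (iterFilter ws L) := by
  induction L with
  | zero => exact suppOn_deltaF _
  | succ L ih => simpa [iterFilter, mul_add, add_comm] using (hws L).convSeq ih

lemma iterFilter_congr {ws ws' : ℕ → ℤ → ℝ} {L : ℕ} (h : ∀ k < L, ws k = ws' k) :
    iterFilter ws L = iterFilter ws' L := by
  induction L with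
  | zero => rfl
  | succ L ih =>
    rw [iterFilter, iterFilter, h L L.lt_succ_self, ih fun k hk => h k (by omega)]

def padFilters (ws : ℕ → ℤ → ℝ) (L : ℕ) : ℕ → ℤ → ℝ :=
  fun k => if k < L then ws k else deltaF

lemma suppOn_padFilters {s : ℕ} {ws : ℕ → ℤ → ℝ} (hws : ∀ k, SuppOn s (ws k)) (L k : ℕ) :
    SuppOn s (padFilters ws L k) := by
  unfold padFilters
  split_ifs
  exacts [hws k, suppOn_deltaF s]

lemma iterFilter_padFilters (ws : ℕ → ℤ → ℝ) {L M : ℕ} (hLM : L ≤ M) :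
    iterFilter (padFilters ws L) M = iterFilter ws L := by
  induction M, hLM using Nat.le_induction with
  | base => exact iterFilter_congr fun k hk => if_pos hk
  | succ M hLM ih =>
    rw [iterFilter, padFilters, if_neg (by omega), convSeq_deltaF_left, ih]

lemma iterConvVec_eq_sum {s d' : ℕ} {ws : ℕ → ℤ → ℝ} (hws : ∀ k, SuppOn s (ws k))
    (v : Fin d' → ℝ) (L : ℕ) (j : Fin (d' + s * L)) :
    iterConvVec ws (fun k => d' + s * k) L v j = ∑ k : Fin d', iterFilter ws L (j - k) * v k := by
  induction L with
  | zero =>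
    refine Eq.symm <| (Fintype.sum_eq_single j fun k hk => ?_).trans ?_
    · simp [deltaF, iterFilter, sub_eq_zero, Fin.val_ne_of_ne (Ne.symm hk)]
    · simp [deltaF, iterFilter, iterConvVec]
  | succ L ih =>
    have hconv (k : Fin d') : convSeq (ws L) (iterFilter ws L) (j - k) =
        ∑ m : Fin (d' + s * L), ws L (j - m) * iterFilter ws L (m - k) := by
      refine (convSeq_shift _ _ _ _).symm.trans (convSeq_eq_sum_fin (M := k + s * L) _ _
        (fun t ht => suppOn_iterFilter hws L (t - k) (by push_cast at ht; omega)) (by omega) _)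
    simp only [iterConvVec, convVecD, ih, iterFilter, hconv, Finset.mul_sum, Finset.sum_mul]
    rw [Finset.sum_comm]
    simp only [mul_assoc]

def finToSeq {N : ℕ} (v : Fin N → ℝ) : ℤ → ℝ :=
  fun m => if h : 0 ≤ m ∧ m < N then v ⟨m.toNat, by omega⟩ else 0

lemma suppOn_finToSeq {N : ℕ} (v : Fin N → ℝ) : SuppOn N (finToSeq v) :=
  fun _ hm => dif_neg (by omega)

lemma finToSeq_natCast {N : ℕ} (v : Fin N → ℝ) (p : Fin N) : finToSeq v (p : ℕ) = v p := by
  simp [finToSeq]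

/-- Row `i` of `W`, reversed, occupies positions `i d', …, (i + 1) d' - 1`. -/
def matrixSeq {n d' : ℕ} (W : Matrix (Fin n) (Fin d') ℝ) : ℤ → ℝ :=
  finToSeq fun p => W (finProdFinEquiv.symm p).1 (finProdFinEquiv.symm p).2.rev

lemma suppOn_matrixSeq {n d' : ℕ} (W : Matrix (Fin n) (Fin d') ℝ) :
    SuppOn (d' * n) (matrixSeq W) :=
  mul_comm n d' ▸ suppOn_finToSeq _

lemma matrixSeq_apply {n d' : ℕ} (W : Matrix (Fin n) (Fin d') ℝ) (i : Fin n) (k : Fin d') :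
    matrixSeq W (((i : ℤ) + 1) * d' - 1 - k) = W i k := by
  have hpos : ((i : ℤ) + 1) * d' - 1 - k = ((finProdFinEquiv (i, k.rev) : ℕ) : ℤ) := by
    simp only [finProdFinEquiv_apply_val, Fin.val_rev]
    push_cast [Nat.cast_sub (Nat.succ_le_of_lt k.isLt)]
    ring
  rw [hpos, matrixSeq, finToSeq_natCast, Equiv.symm_apply_apply, Fin.rev_rev]

lemma le_div_of_lt_div_add_one {L S s : ℕ} (hs : 2 ≤ s) (h : (L : ℝ) < S / (s - 1) + 1) :
    L ≤ (S + s - 2) / (s - 1) := by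
  have hs1 : (0 : ℝ) < s - 1 := by
    have : (2 : ℝ) ≤ s := by exact_mod_cast hs
    linarith
  have hreal : ((L : ℝ) - 1) * (s - 1) < S := (lt_div_iff₀ hs1).mp (by linarith)
  have hnat : L * (s - 1) < S + (s - 1) := by
    have : ((L * (s - 1) : ℕ) : ℝ) < ((S + (s - 1) : ℕ) : ℝ) := by
      push_cast [Nat.cast_sub (by omega : 1 ≤ s)]
      linarith
    exact_mod_cast this
  rw [Nat.le_div_iff_mul_le (by omega)]
  omega

lemma pool_apply_succ {D u : ℕ} (hu : 0 < u) (v : Fin D → ℝ) (i : ℕ) (hi : (i + 1) * u ≤ D) :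
    pool D u 0 v (i + 1) =
      v ⟨(i + 1) * u - 1, Nat.sub_one_lt_of_le (Nat.mul_pos i.succ_pos hu) hi⟩ :=
  dif_pos ⟨Nat.mul_pos i.succ_pos hu, hi⟩

theorem conv_factorization_of_linear_maps_general (s d' n : ℕ)
    (hs : 2 ≤ s) (hsd : s ≤ d')
    (W : Matrix (Fin n) (Fin d') ℝ)
    (Hfact : ∀ (S : ℕ) (u : ℤ → ℝ), SuppOn S u →
      ∃ (L : ℕ) (ws : ℕ → ℤ → ℝ), ((L : ℝ) < (S : ℝ) / ((s : ℝ) - 1) + 1) ∧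
        (∀ k, SuppOn s (ws k)) ∧ u = iterFilter ws L) :
    ∃ ws : ℕ → ℤ → ℝ, (∀ k, SuppOn s (ws k)) ∧
      ∀ (x : Fin d' → ℝ) (i : Fin n),
        pool (d' + s * ((d' * n + s - 2) / (s - 1))) d' 0
          (iterConvVec ws (fun k => d' + s * k) ((d' * n + s - 2) / (s - 1)) x)
          ((i : ℕ) + 1) = W.mulVec x i := by
  set Lstar := (d' * n + s - 2) / (s - 1)
  obtain ⟨L, ws, hL, hws, hu⟩ := Hfact (d' * n) (matrixSeq W) (suppOn_matrixSeq W)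
  have hLle : L ≤ Lstar := le_div_of_lt_div_add_one hs hL
  have hwidth : d' * n ≤ s * Lstar := by
    have hceil : d' * n + s - 2 < Lstar * (s - 1) + (s - 1) := Nat.lt_div_mul_add (by omega)
    have hmono : Lstar * (s - 1) ≤ s * Lstar := by
      rw [mul_comm s]
      exact Nat.mul_le_mul_left _ (Nat.sub_le s 1)
    omega
  refine ⟨padFilters ws L, suppOn_padFilters hws L, fun x i => ?_⟩
  have hrow : ((i : ℕ) + 1) * d' ≤ d' + s * Lstar := by
    have hi : (i : ℕ) + 1 ≤ n := i.isLt
    have := Nat.mul_le_mul_right d' hi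
    rw [mul_comm n] at this
    omega
  have hd : 0 < d' := by omega
  rw [pool_apply_succ hd _ _ hrow, iterConvVec_eq_sum (suppOn_padFilters hws L),
    iterFilter_padFilters ws hLle, ← hu]
  refine Finset.sum_congr rfl fun k _ => ?_
  congr 1
  convert matrixSeq_apply W i k using 2
  push_cast [Nat.cast_sub (Nat.mul_pos (by omega) hd : 0 < ((i : ℕ) + 1) * d')]
  rfl

/-- Convolutional factorization of arbitrary linear maps: given the filter
factorization property (any sequence supported on `{0,…,S}` factors into fewer
than `S/(s-1)+1` filters supported on `{0,…,s}`), every `W ∈ ℝ^{ñ×d'}` is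
realized by `L* = ⌈d'ñ/(s-1)⌉` zero-padded convolutional layers followed by
location-based pooling with scale `d'` and offset `0`. -/
theorem conv_factorization_of_linear_maps (s d' n : ℕ)
    (hs : 2 ≤ s) (hsd : s ≤ d') (hn : 1 ≤ n)
    (W : Matrix (Fin n) (Fin d') ℝ)
    (Hfact : ∀ (S : ℕ) (u : ℤ → ℝ), SuppOn S u →
      ∃ (L : ℕ) (ws : ℕ → ℤ → ℝ), ((L : ℝ) < (S : ℝ) / ((s : ℝ) - 1) + 1) ∧
        (∀ k, SuppOn s (ws k)) ∧ u = iterFilter ws L) :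
    ∃ ws : ℕ → ℤ → ℝ, (∀ k, SuppOn s (ws k)) ∧
      ∀ (x : Fin d' → ℝ) (i : Fin n),
        pool (d' + s * ((d' * n + s - 2) / (s - 1))) d' 0
          (iterConvVec ws (fun k => d' + s * k) ((d' * n + s - 2) / (s - 1)) x)
          ((i : ℕ) + 1) = W.mulVec x i :=
  conv_factorization_of_linear_maps_general s d' n hs hsd W Hfact
end
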